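/- (Removing a zero-gain item preserves subsequent gains) Let E be a finite set and f : 2^E → ℝ a monotonically increasing submodular function. Let A = (a₁, …, a_L) be an ordering of E and suppose the j-th item has zero marginal gain: f(A_{j-1} ∪ {a_j}) = f(A_{j-1}). Then for every k > j, f(A_k) = f(A_k \ {a_j}); consequently, the marginal gains of all items other than a_j are unchanged when a_j is deleted from the ordering, and the objective value ∑_k g_A(a_k) w(a_k) computed on the ordering with a_j removed equals that of A for any weights w. -/

import Mathlib

open Finset

/-- The set of the first `k` items of the ordering `A`, i.e. `A_k`. -/
def prefixSet {E : Type*} [DecidableEq E] (A : List E) (k : ℕ) : Finset E :=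
  (A.take k).toFinset

/-- The marginal gain `g_A(a_k) = f(A_{k-1} ∪ {a_k}) − f(A_{k-1})` of the item at
(0-based) position `i` of the ordering `A`. -/
def gain {E : Type*} [DecidableEq E] (f : Finset E → ℝ) (A : List E) (i : Fin A.length) : ℝ :=
  f (insert (A.get i) (prefixSet A i.val)) - f (prefixSet A i.val)

/-! For a monotone submodular function, once adding an item yields zero gain, adding it later
yields zero gain as well: its gain is nonnegative by monotonicity and at most the earlier one
by submodularity. Applied to the zero-gain item `a_j` of an ordering, this shows that `a_j` can
be removed from every later prefix without changing `f`. The prefixes of the shortened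
ordering are the prefixes of `A`, with `a_j` removed once they have passed position `j`, so all
other gains are unchanged, and the gain of `a_j` contributes nothing to the weighted sum. -/

theorem apply_insert_eq_of_subset {E : Type*} [DecidableEq E] {f : Finset E → ℝ}
    (hmono : ∀ X Y : Finset E, X ⊆ Y → f X ≤ f Y)
    (hsub : ∀ (X Y : Finset E) (e : E), X ⊆ Y → e ∉ Y →
      f (insert e Y) - f Y ≤ f (insert e X) - f X)
    {X Y : Finset E} {e : E} (hXY : X ⊆ Y) (he : f (insert e X) = f X) :
    f (insert e Y) = f Y := by
  by_cases heY : e ∈ Y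
  · rw [insert_eq_of_mem heY]
  · have := hsub X Y e hXY heY
    have := hmono Y (insert e Y) (subset_insert e Y)
    linarith

namespace List

variable {α : Type*}

theorem take_eraseIdx_of_le (l : List α) {i k : ℕ} (h : i ≤ k) :
    (l.eraseIdx i).take k = (l.take (k + 1)).eraseIdx i := by
  apply ext_getElem
  · simp only [length_take, length_eraseIdx]
    split_ifs <;> omega
  · intro n _ _
    simp only [getElem_take, getElem_eraseIdx]

theorem Nodup.toFinset_eraseIdx [DecidableEq α] {l : List α} (hl : l.Nodup) {i : ℕ}
    (hi : i < l.length) : (l.eraseIdx i).toFinset = l.toFinset.erase l[i] := by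
  ext x
  rw [← hl.erase_getElem i hi, mem_toFinset, hl.mem_erase_iff, Finset.mem_erase, mem_toFinset]

/-- The position in `l` of the `i`-th entry of `l.eraseIdx j`. -/
def succAboveIdx (l : List α) (j : Fin l.length) (i : Fin (l.eraseIdx j).length) :
    Fin l.length :=
  have h := length_eraseIdx_add_one j.isLt
  Fin.cast h ((Fin.cast h.symm j).succAbove i)

theorem val_succAboveIdx (l : List α) (j : Fin l.length) (i : Fin (l.eraseIdx j).length) :
    (l.succAboveIdx j i : ℕ) = if (i : ℕ) < j then (i : ℕ) else (i : ℕ) + 1 := by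
  simp only [succAboveIdx, Fin.val_cast, Fin.succAbove, Fin.lt_def, Fin.val_castSucc]
  split_ifs <;> simp

theorem get_succAboveIdx (l : List α) (j : Fin l.length) (i : Fin (l.eraseIdx j).length) :
    l.get (l.succAboveIdx j i) = (l.eraseIdx j).get i := by
  have hi := val_succAboveIdx l j i
  simp only [get_eq_getElem, getElem_eraseIdx]
  split_ifs at hi ⊢ <;> simp only [hi]

theorem sum_eq_add_sum_succAboveIdx {M : Type*} [AddCommMonoid M] (l : List α)
    (j : Fin l.length) (F : Fin l.length → M) :
    ∑ i, F i = F j + ∑ i, F (l.succAboveIdx j i) := by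
  have h := length_eraseIdx_add_one j.isLt
  rw [← Fin.sum_congr' F h, Fin.sum_univ_succAbove _ (Fin.cast h.symm j)]
  rfl

end List

section Prefix

variable {E : Type*} [DecidableEq E]

theorem prefixSet_succ (A : List E) {k : ℕ} (hk : k < A.length) :
    prefixSet A (k + 1) = insert A[k] (prefixSet A k) := by
  rw [prefixSet, List.take_add_one, List.getElem?_eq_getElem hk, Option.toList_some,
    List.toFinset_append, List.toFinset_cons, List.toFinset_nil, insert_empty, union_comm,
    ← insert_eq, prefixSet]

theorem prefixSet_mono (A : List E) {k l : ℕ} (h : k ≤ l) : prefixSet A k ⊆ prefixSet A l :=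
  fun _ hx => List.mem_toFinset.2 (List.take_subset_take_left A h (List.mem_toFinset.1 hx))

theorem getElem_mem_prefixSet (A : List E) {j k : ℕ} (hj : j < A.length) (hjk : j < k) :
    A[j] ∈ prefixSet A k := by
  rw [prefixSet, List.mem_toFinset, List.mem_iff_getElem]
  exact ⟨j, by simp; omega, List.getElem_take⟩

theorem getElem_notMem_prefixSet {A : List E} (hA : A.Nodup) {k : ℕ} (hk : k < A.length) :
    A[k] ∉ prefixSet A k := by
  rw [prefixSet, List.mem_toFinset, List.mem_iff_getElem]
  rintro ⟨i, hi, hik⟩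
  rw [List.getElem_take, hA.getElem_inj_iff] at hik
  rw [List.length_take] at hi
  omega

theorem prefixSet_eraseIdx_of_le (A : List E) {j k : ℕ} (hk : k ≤ j) :
    prefixSet (A.eraseIdx j) k = prefixSet A k := by
  rw [prefixSet, List.take_eraseIdx_eq_take_of_le A k j hk, prefixSet]

theorem prefixSet_eraseIdx_of_ge {A : List E} (hA : A.Nodup) {j k : ℕ} (hj : j < A.length)
    (hk : j ≤ k) : prefixSet (A.eraseIdx j) k = (prefixSet A (k + 1)).erase A[j] := by
  rw [prefixSet, List.take_eraseIdx_of_le A hk,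
    (hA.sublist (List.take_sublist _ _)).toFinset_eraseIdx (by simp; omega), List.getElem_take,
    prefixSet]

theorem gain_eq_sub (f : Finset E → ℝ) (A : List E) (i : Fin A.length) :
    gain f A i = f (prefixSet A (i + 1)) - f (prefixSet A i) := by
  rw [gain, prefixSet_succ A i.isLt, List.get_eq_getElem]

end Prefix

section ZeroGain

variable {E : Type*} [DecidableEq E] {f : Finset E → ℝ}
  (hmono : ∀ X Y : Finset E, X ⊆ Y → f X ≤ f Y)
  (hsub : ∀ (X Y : Finset E) (e : E), X ⊆ Y → e ∉ Y →
    f (insert e Y) - f Y ≤ f (insert e X) - f X)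
  {A : List E} (hA : A.Nodup) {j : Fin A.length}
  (hzero : f (insert (A.get j) (prefixSet A j)) = f (prefixSet A j))
include hmono hsub hA hzero

theorem apply_prefixSet_erase_of_lt {k : ℕ} (hjk : (j : ℕ) < k) :
    f (prefixSet A k) = f ((prefixSet A k).erase (A.get j)) := by
  have hsubset : prefixSet A j ⊆ (prefixSet A k).erase (A.get j) :=
    subset_erase.2 ⟨prefixSet_mono A hjk.le, getElem_notMem_prefixSet hA j.isLt⟩
  have := apply_insert_eq_of_subset hmono hsub hsubset hzero
  rwa [List.get_eq_getElem, insert_erase (getElem_mem_prefixSet A j.isLt hjk)] at this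

theorem apply_prefixSet_eraseIdx_of_ge {k : ℕ} (hjk : (j : ℕ) ≤ k) :
    f (prefixSet (A.eraseIdx j) k) = f (prefixSet A (k + 1)) := by
  rw [prefixSet_eraseIdx_of_ge hA j.isLt hjk,
    ← List.get_eq_getElem,
    ← apply_prefixSet_erase_of_lt hmono hsub hA hzero (Nat.lt_succ_of_le hjk)]

theorem gain_eraseIdx (i : Fin (A.eraseIdx j).length) :
    gain f (A.eraseIdx j) i = gain f A (A.succAboveIdx j i) := by
  rw [gain_eq_sub, gain_eq_sub, List.val_succAboveIdx]
  split_ifs with hij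
  · rw [prefixSet_eraseIdx_of_le A hij, prefixSet_eraseIdx_of_le A hij.le]
  · rw [not_lt] at hij
    rw [apply_prefixSet_eraseIdx_of_ge hmono hsub hA hzero hij,
      apply_prefixSet_eraseIdx_of_ge hmono hsub hA hzero (by omega)]

end ZeroGain

theorem stmt_12_general {E : Type*} [DecidableEq E]
    (f : Finset E → ℝ)
    (hmono : ∀ X Y : Finset E, X ⊆ Y → f X ≤ f Y)
    (hsub : ∀ (X Y : Finset E) (e : E), X ⊆ Y → e ∉ Y →
      f (insert e Y) - f Y ≤ f (insert e X) - f X)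
    (A : List E) (hnodup : A.Nodup)
    (j : Fin A.length)
    (hzero : f (insert (A.get j) (prefixSet A j.val)) = f (prefixSet A j.val)) :
    (∀ k : ℕ, (j : ℕ) < k → f (prefixSet A k) = f ((prefixSet A k).erase (A.get j))) ∧
    (∀ (i : Fin A.length) (i' : Fin (A.eraseIdx j.val).length),
      (A.eraseIdx j.val).get i' = A.get i → gain f (A.eraseIdx j.val) i' = gain f A i) ∧
    (∀ w : E → ℝ,
      ∑ i' : Fin (A.eraseIdx j.val).length,
          gain f (A.eraseIdx j.val) i' * w ((A.eraseIdx j.val).get i') =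
        ∑ i : Fin A.length, gain f A i * w (A.get i)) := by
  refine ⟨fun k => apply_prefixSet_erase_of_lt hmono hsub hnodup hzero, fun i i' hi => ?_,
    fun w => ?_⟩
  · rw [gain_eraseIdx hmono hsub hnodup hzero, ← hnodup.get_inj_iff.1
      ((A.get_succAboveIdx j i').trans hi)]
  · have hgain_j : gain f A j = 0 := by rw [gain, hzero, sub_self]
    rw [A.sum_eq_add_sum_succAboveIdx j, hgain_j, zero_mul, zero_add]
    simp only [gain_eraseIdx hmono hsub hnodup hzero, A.get_succAboveIdx]

/-- Removing a zero-gain item preserves subsequent values of `f` on prefixes, the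
marginal gains of all other items, and the objective value for any weights. -/
theorem stmt_12 {E : Type*} [Fintype E] [DecidableEq E]
    (f : Finset E → ℝ)
    (hmono : ∀ X Y : Finset E, X ⊆ Y → f X ≤ f Y)
    (hsub : ∀ (X Y : Finset E) (e : E), X ⊆ Y → e ∉ Y →
      f (insert e Y) - f Y ≤ f (insert e X) - f X)
    (A : List E) (hnodup : A.Nodup) (hfull : ∀ e : E, e ∈ A)
    (j : Fin A.length)
    (hzero : f (insert (A.get j) (prefixSet A j.val)) = f (prefixSet A j.val)) :
    (∀ k : ℕ, (j : ℕ) < k → f (prefixSet A k) = f ((prefixSet A k).erase (A.get j))) ∧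
    (∀ (i : Fin A.length) (i' : Fin (A.eraseIdx j.val).length),
      (A.eraseIdx j.val).get i' = A.get i → gain f (A.eraseIdx j.val) i' = gain f A i) ∧
    (∀ w : E → ℝ,
      ∑ i' : Fin (A.eraseIdx j.val).length,
          gain f (A.eraseIdx j.val) i' * w ((A.eraseIdx j.val).get i') =
        ∑ i : Fin A.length, gain f A i * w (A.get i)) :=
  stmt_12_general f hmono hsub A hnodup j hzero
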